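/- Let n ≥ 2 and let A be an n×n row-stochastic strictly diagonally dominant positive real matrix. Then K_max − K_min ≤ 2n·log₂(n)/σ_min(A). -/

import Mathlib

open Matrix Finset Real

noncomputable def rowEntropy {n : ℕ} (A : Matrix (Fin n) (Fin n) ℝ) (i : Fin n) : ℝ :=
  -∑ k, A i k * Real.logb 2 (A i k)

noncomputable def Kvec {n : ℕ} (A : Matrix (Fin n) (Fin n) ℝ) (j : Fin n) : ℝ :=
  ∑ i, A⁻¹ j i * rowEntropy A i

noncomputable def Kmax {n : ℕ} (A : Matrix (Fin n) (Fin n) ℝ) : ℝ := ⨆ j, Kvec A j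

noncomputable def Kmin {n : ℕ} (A : Matrix (Fin n) (Fin n) ℝ) : ℝ := ⨅ j, Kvec A j

def IsPmf {n : ℕ} (p : Fin n → ℝ) : Prop := (∀ i, 0 ≤ p i) ∧ ∑ i, p i = 1

noncomputable def mutualInfo {n : ℕ} (A : Matrix (Fin n) (Fin n) ℝ) (p : Fin n → ℝ) : ℝ :=
  -(∑ j, Aᵀ.mulVec p j * Real.logb 2 (Aᵀ.mulVec p j))
    + ∑ i, ∑ j, p i * A i j * Real.logb 2 (A i j)

noncomputable def capacity {n : ℕ} (A : Matrix (Fin n) (Fin n) ℝ) : ℝ :=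
  sSup {x : ℝ | ∃ p : Fin n → ℝ, IsPmf p ∧ mutualInfo A p = x}

noncomputable def qStar {n : ℕ} (A : Matrix (Fin n) (Fin n) ℝ) (j : Fin n) : ℝ :=
  (2 : ℝ) ^ (-Kvec A j) / ∑ i, (2 : ℝ) ^ (-Kvec A i)

noncomputable def pStar {n : ℕ} (A : Matrix (Fin n) (Fin n) ℝ) : Fin n → ℝ :=
  (A⁻¹)ᵀ.mulVec (qStar A)

noncomputable def Ubound {n : ℕ} (A : Matrix (Fin n) (Fin n) ℝ) : ℝ :=
  -(∑ j, qStar A j * Real.logb 2 (qStar A j))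
    + ∑ i, ∑ j, pStar A i * A i j * Real.logb 2 (A i j)

noncomputable def cmin {n : ℕ} (A : Matrix (Fin n) (Fin n) ℝ) : ℝ :=
  ⨅ i, A i i / ∑ j ∈ Finset.univ.erase i, |A i j|

noncomputable def Hmax {n : ℕ} (A : Matrix (Fin n) (Fin n) ℝ) : ℝ := ⨆ i, rowEntropy A i

noncomputable def sigmaMin {n : ℕ} (A : Matrix (Fin n) (Fin n) ℝ) : ℝ :=
  Real.sqrt (⨅ i, (show (Aᵀ * A).IsHermitian by
    simpa [Matrix.conjTranspose_eq_transpose_of_trivial] using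
      Matrix.isHermitian_conjTranspose_mul_self A).eigenvalues i)

def RowStochastic {n : ℕ} (A : Matrix (Fin n) (Fin n) ℝ) : Prop :=
  (∀ i j, 0 ≤ A i j) ∧ ∀ i, ∑ j, A i j = 1

def SDDPos {n : ℕ} (A : Matrix (Fin n) (Fin n) ℝ) : Prop :=
  (∀ i j, 0 < A i j) ∧ ∀ i, ∑ j ∈ Finset.univ.erase i, A i j < A i i

/-!
Since `K = A⁻¹ H` for the vector `H` of row entropies, `A K = H`. The smallest singular value
gives `σ_min ‖K‖₂ ≤ ‖A K‖₂ = ‖H‖₂`, and every row entropy lies in `[0, log₂ n]`, so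
`‖H‖₂ ≤ √n log₂ n`. Hence every `|K_j|` is at most `√n log₂ n / σ_min`, and `K_max - K_min` is at
most twice that.
-/

namespace Matrix

theorem IsHermitian.iInf_eigenvalues_mul_dotProduct_self_le {ι : Type*} [Fintype ι]
    [DecidableEq ι] {M : Matrix ι ι ℝ} (hM : M.IsHermitian) (x : ι → ℝ) :
    (⨅ i, hM.eigenvalues i) * (x ⬝ᵥ x) ≤ x ⬝ᵥ (M *ᵥ x) := by
  have hdiag := hM.spectral_theorem
  have hUU := mem_unitaryGroup_iff.mp hM.eigenvectorUnitary.2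
  rw [Unitary.conjStarAlgAut_apply] at hdiag
  generalize (hM.eigenvectorUnitary : Matrix ι ι ℝ) = U at hdiag hUU
  change M = U * diagonal hM.eigenvalues * Uᵀ at hdiag
  change U * Uᵀ = 1 at hUU
  generalize hM.eigenvalues = d at hdiag ⊢
  set y := Uᵀ *ᵥ x
  have hnorm : y ⬝ᵥ y = x ⬝ᵥ x := by
    rw [dotProduct_mulVec, vecMul_transpose, mulVec_mulVec, hUU, one_mulVec]
  have hquad : x ⬝ᵥ (M *ᵥ x) = ∑ i, d i * (y i * y i) := by
    rw [hdiag, ← mulVec_mulVec, ← mulVec_mulVec, dotProduct_mulVec, ← mulVec_transpose]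
    simp only [dotProduct, mulVec_diagonal]
    exact Finset.sum_congr rfl fun i _ => by ring
  rw [← hnorm, hquad, dotProduct, Finset.mul_sum]
  gcongr with i
  · exact mul_self_nonneg _
  · exact ciInf_le (Set.finite_range _).bddBelow i

end Matrix

theorem Real.logb_natCast_nonneg {b : ℝ} (hb : 1 < b) (n : ℕ) : 0 ≤ logb b n :=
  div_nonneg (log_natCast_nonneg n) (log_pos hb).le

theorem Real.sum_negMulLog_le_log_card {ι : Type*} [Fintype ι] {p : ι → ℝ}
    (h0 : ∀ i, 0 ≤ p i) (h1 : ∑ i, p i = 1) :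
    ∑ i, negMulLog (p i) ≤ log (Fintype.card ι) := by
  have : Nonempty ι := by
    by_contra hι
    simp [not_nonempty_iff.mp hι] at h1
  have hcard : (0 : ℝ) < Fintype.card ι := by exact_mod_cast Fintype.card_pos
  have hw : ∑ _i : ι, (Fintype.card ι : ℝ)⁻¹ = 1 := by simp [hcard.ne']
  have := concaveOn_negMulLog.le_map_sum (t := Finset.univ)
    (w := fun _ => (Fintype.card ι : ℝ)⁻¹) (fun _ _ => by positivity) hw
    (fun i _ => Set.mem_Ici.mpr (h0 i))
  simp only [smul_eq_mul, ← Finset.mul_sum, h1, mul_one] at this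
  rwa [negMulLog, log_inv, neg_mul_neg, mul_le_mul_iff_right₀ (inv_pos.mpr hcard)] at this

theorem ciSup_sub_ciInf_le_two_mul_of_abs_le {ι : Type*} {f : ι → ℝ} {B : ℝ} (hB : 0 ≤ B)
    (hf : ∀ i, |f i| ≤ B) : (⨆ i, f i) - ⨅ i, f i ≤ 2 * B := by
  rcases isEmpty_or_nonempty ι with hι | hι
  · simp [hB]
  · have hsup : ⨆ i, f i ≤ B := ciSup_le fun i => (abs_le.mp (hf i)).2
    have hinf : -B ≤ ⨅ i, f i := le_ciInf fun i => (abs_le.mp (hf i)).1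
    linarith

theorem sigmaMin_sq_mul_dotProduct_self_le {n : ℕ} (A : Matrix (Fin n) (Fin n) ℝ)
    (x : Fin n → ℝ) : sigmaMin A ^ 2 * (x ⬝ᵥ x) ≤ (A *ᵥ x) ⬝ᵥ (A *ᵥ x) := by
  rw [sigmaMin, sq_sqrt (iInf_nonneg fun i => ?_)]
  swap
  · exact eigenvalues_conjTranspose_mul_self_nonneg A i
  calc _ ≤ x ⬝ᵥ ((Aᵀ * A) *ᵥ x) :=
        (isHermitian_conjTranspose_mul_self A).iInf_eigenvalues_mul_dotProduct_self_le x
    _ = _ := by rw [← mulVec_mulVec, dotProduct_mulVec, vecMul_transpose]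

theorem sigmaMin_pos {n : ℕ} [NeZero n] {A : Matrix (Fin n) (Fin n) ℝ} (hA : A.det ≠ 0) :
    0 < sigmaMin A := by
  have hpos := PosDef.conjTranspose_mul_self A
    (mulVec_injective_iff_isUnit.mpr ((isUnit_iff_isUnit_det A).mpr hA.isUnit))
  obtain ⟨i, hi⟩ :=
    exists_eq_ciInf_of_finite (f := (isHermitian_conjTranspose_mul_self A).eigenvalues)
  exact sqrt_pos.mpr (hi ▸ hpos.eigenvalues_pos i)

theorem SDDPos.det_ne_zero {n : ℕ} {A : Matrix (Fin n) (Fin n) ℝ} (hA : SDDPos A) :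
    A.det ≠ 0 := by
  refine det_ne_zero_of_sum_row_lt_diag fun k => ?_
  simp only [Real.norm_of_nonneg (hA.1 _ _).le]
  exact hA.2 k

theorem rowEntropy_eq_sum_negMulLog {n : ℕ} (A : Matrix (Fin n) (Fin n) ℝ) (i : Fin n) :
    rowEntropy A i = (∑ k, negMulLog (A i k)) / log 2 := by
  simp only [rowEntropy, negMulLog, logb, Finset.sum_div, ← Finset.sum_neg_distrib]
  exact Finset.sum_congr rfl fun k _ => by ring

theorem RowStochastic.abs_rowEntropy_le {n : ℕ} {A : Matrix (Fin n) (Fin n) ℝ}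
    (hA : RowStochastic A) (i : Fin n) : |rowEntropy A i| ≤ logb 2 n := by
  rw [rowEntropy_eq_sum_negMulLog, logb, abs_div, abs_of_pos (log_pos one_lt_two)]
  gcongr
  rw [abs_of_nonneg]
  · simpa using Real.sum_negMulLog_le_log_card (hA.1 i) (hA.2 i)
  · refine Finset.sum_nonneg fun k _ => negMulLog_nonneg (hA.1 i k) ?_
    exact hA.2 i ▸ Finset.single_le_sum (fun k _ => hA.1 i k) (Finset.mem_univ k)

theorem mulVec_Kvec {n : ℕ} {A : Matrix (Fin n) (Fin n) ℝ} (hA : A.det ≠ 0) :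
    A *ᵥ Kvec A = rowEntropy A := by
  rw [show Kvec A = A⁻¹ *ᵥ rowEntropy A from rfl, mulVec_mulVec, mul_nonsing_inv A hA.isUnit,
    one_mulVec]

theorem abs_Kvec_le {n : ℕ} {A : Matrix (Fin n) (Fin n) ℝ} (hst : RowStochastic A)
    (hA : SDDPos A) (j : Fin n) : |Kvec A j| ≤ √n * logb 2 n / sigmaMin A := by
  have : NeZero n := ⟨j.pos.ne'⟩
  have hσ := sigmaMin_pos hA.det_ne_zero
  have hlog := logb_natCast_nonneg one_lt_two n
  set K := Kvec A
  have hH : rowEntropy A ⬝ᵥ rowEntropy A ≤ (√n * logb 2 n) ^ 2 := by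
    calc _ ≤ ∑ _i : Fin n, logb 2 (n : ℝ) ^ 2 := Finset.sum_le_sum fun i _ => by
          rw [← sq, ← sq_abs]
          exact pow_le_pow_left₀ (abs_nonneg _) (hst.abs_rowEntropy_le i) 2
      _ = (√n * logb 2 n) ^ 2 := by simp [mul_pow]
  have hKj : K j ^ 2 ≤ K ⬝ᵥ K := by
    simpa [dotProduct, sq] using
      Finset.single_le_sum (fun i _ => mul_self_nonneg (K i)) (Finset.mem_univ j)
  have hsq : (sigmaMin A * |K j|) ^ 2 ≤ (√n * logb 2 n) ^ 2 :=
    calc (sigmaMin A * |K j|) ^ 2 = sigmaMin A ^ 2 * K j ^ 2 := by rw [mul_pow, sq_abs]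
      _ ≤ sigmaMin A ^ 2 * (K ⬝ᵥ K) := by gcongr
      _ ≤ (A *ᵥ K) ⬝ᵥ (A *ᵥ K) := sigmaMin_sq_mul_dotProduct_self_le A K
      _ = rowEntropy A ⬝ᵥ rowEntropy A := by rw [mulVec_Kvec hA.det_ne_zero]
      _ ≤ _ := hH
  rw [le_div_iff₀' hσ]
  exact (pow_le_pow_iff_left₀ (by positivity) (by positivity) two_ne_zero).mp hsq

theorem Kmax_sub_Kmin_le_simple_general {n : ℕ} (A : Matrix (Fin n) (Fin n) ℝ)
    (hst : RowStochastic A) (hA : SDDPos A) :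
    Kmax A - Kmin A ≤ 2 * (n : ℝ) * Real.logb 2 (n : ℝ) / sigmaMin A := by
  have hlog := logb_natCast_nonneg one_lt_two n
  have hsqrt : √(n : ℝ) ≤ n :=
    sqrt_le_self_iff.mpr ((Nat.eq_zero_or_pos n).imp (by exact_mod_cast ·) (by exact_mod_cast ·))
  have hσ : 0 ≤ sigmaMin A := sqrt_nonneg _
  calc Kmax A - Kmin A ≤ 2 * (n * logb 2 n / sigmaMin A) :=
        ciSup_sub_ciInf_le_two_mul_of_abs_le (by positivity) fun j =>
          (abs_Kvec_le hst hA j).trans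
            (by gcongr : √(n : ℝ) * logb 2 n / sigmaMin A ≤ n * logb 2 n / sigmaMin A)
    _ = 2 * n * logb 2 n / sigmaMin A := by ring

theorem Kmax_sub_Kmin_le_simple {n : ℕ} (hn : 2 ≤ n) (A : Matrix (Fin n) (Fin n) ℝ)
    (hst : RowStochastic A) (hA : SDDPos A) :
    Kmax A - Kmin A ≤ 2 * (n : ℝ) * Real.logb 2 (n : ℝ) / sigmaMin A :=
  Kmax_sub_Kmin_le_simple_general A hst hA
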